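/- With R_k, S_k as in the recursion R_1 = 4d - c^2, S_1 = d, R_{k+1} = R_k^2 + cR_kS_k + dS_k^2, S_{k+1} = R_k^2: for all k ≥ 1, deg R_k - deg R_k^1 = (2^k - (-1)^k)/3, where R_k^1(d) = R_k(0,d) and deg R_k denotes the total degree of R_k in ℤ[c,d]. -/
import Mathlib


open MvPolynomial

/-- The pair `(R_{m+1}, S_{m+1})` of polynomials in `c = X 0` and `d = X 1`:
`R_1 = 4d - c²`, `S_1 = d`, `R_{m+1} = R_m² + c·R_m·S_m + d·S_m²`, `S_{m+1} = R_m²`. -/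
noncomputable def RS : ℕ → MvPolynomial (Fin 2) ℤ × MvPolynomial (Fin 2) ℤ
  | 0 => (4 * X 1 - (X 0) ^ 2, X 1)
  | (m + 1) =>
      ((RS m).1 ^ 2 + X 0 * (RS m).1 * (RS m).2 + X 1 * (RS m).2 ^ 2, (RS m).1 ^ 2)

/-- `R_m` for `m ≥ 1`. -/
noncomputable def Rpoly (m : ℕ) : MvPolynomial (Fin 2) ℤ := (RS (m - 1)).1

/-- `S_m` for `m ≥ 1`. -/
noncomputable def Spoly (m : ℕ) : MvPolynomial (Fin 2) ℤ := (RS (m - 1)).2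

/-- `R_k^1(d) = R_k(0, d)`, as a polynomial in `d`. -/
noncomputable def R1poly (k : ℕ) : Polynomial ℤ :=
  aeval (fun i : Fin 2 => if i = 0 then 0 else Polynomial.X) (Rpoly k)

/-! ### Auxiliary definitions -/

/-- Specialization at `d = 0`: `u_{n+1} = R_{n+1}(c,0)`, `v_{n+1} = S_{n+1}(c,0)`. -/
noncomputable def uvP : ℕ → Polynomial ℤ × Polynomial ℤ
  | 0 => (-(Polynomial.X ^ 2), 0)
  | (n + 1) => ((uvP n).1 ^ 2 + Polynomial.X * (uvP n).1 * (uvP n).2, (uvP n).1 ^ 2)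

/-- Specialization at `c = 0`: `p_{n+1} = R_{n+1}(0,d)`, `q_{n+1} = S_{n+1}(0,d)`. -/
noncomputable def pqP : ℕ → Polynomial ℤ × Polynomial ℤ
  | 0 => (4 * Polynomial.X, Polynomial.X)
  | (n + 1) => ((pqP n).1 ^ 2 + Polynomial.X * (pqP n).2 ^ 2, (pqP n).1 ^ 2)

/-- `aseq n = deg R_{n+1}`. -/
def aseq : ℕ → ℕ
  | 0 => 2
  | (n + 1) => 2 * aseq n + if n % 2 = 1 then 1 else 0

/-- `alseq n = deg R_{n+1}^1`. -/
def alseq : ℕ → ℕ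
  | 0 => 1
  | (n + 1) => 2 * alseq n + if n % 2 = 0 then 1 else 0

/-! ### Specialization lemmas -/

lemma aeval_RS_c (n : ℕ) :
    aeval (fun i : Fin 2 => if i = 0 then Polynomial.X else 0) (RS n).1 = (uvP n).1 ∧
    aeval (fun i : Fin 2 => if i = 0 then Polynomial.X else 0) (RS n).2 = (uvP n).2 := by
  induction n with
  | zero =>
      constructor <;>
        simp [RS, uvP, map_sub, map_mul, map_pow, aeval_X,
          show (1 : Fin 2) ≠ 0 by decide]
  | succ n ih =>
      constructor <;>
        simp [RS, uvP, map_add, map_mul, map_pow, aeval_X, ih.1, ih.2,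
          show (1 : Fin 2) ≠ 0 by decide]

lemma aeval_RS_d (n : ℕ) :
    aeval (fun i : Fin 2 => if i = 0 then 0 else Polynomial.X) (RS n).1 = (pqP n).1 ∧
    aeval (fun i : Fin 2 => if i = 0 then 0 else Polynomial.X) (RS n).2 = (pqP n).2 := by
  induction n with
  | zero =>
      constructor <;>
        simp [RS, pqP, map_sub, map_mul, map_pow, aeval_X,
          show (1 : Fin 2) ≠ 0 by decide]
  | succ n ih =>
      constructor <;>
        simp [RS, pqP, map_add, map_mul, map_pow, aeval_X, ih.1, ih.2,
          show (1 : Fin 2) ≠ 0 by decide]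

/-! ### Leading coefficient helpers -/

lemma lead_add_of_lt {f g : Polynomial ℤ} (h : g.natDegree < f.natDegree) :
    (g + f).natDegree = f.natDegree ∧ (g + f).leadingCoeff = f.leadingCoeff := by
  have hd : g.degree < f.degree := Polynomial.degree_lt_degree h
  refine ⟨?_, Polynomial.leadingCoeff_add_of_degree_lt hd⟩
  exact Polynomial.natDegree_eq_of_degree_eq (Polynomial.degree_add_eq_right_of_degree_lt hd)

lemma lead_add_of_eq {f g : Polynomial ℤ} (h : f.natDegree = g.natDegree)
    (hf : 0 < f.leadingCoeff) (hg : 0 < g.leadingCoeff) :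
    (f + g).natDegree = f.natDegree ∧ 0 < (f + g).leadingCoeff := by
  have hco : (f + g).coeff f.natDegree = f.leadingCoeff + g.leadingCoeff := by
    rw [Polynomial.coeff_add]
    unfold Polynomial.leadingCoeff
    rw [h]
  have hpos : 0 < (f + g).coeff f.natDegree := by rw [hco]; positivity
  have hle : (f + g).natDegree ≤ f.natDegree := by
    refine (Polynomial.natDegree_add_le f g).trans ?_
    omega
  have hge : f.natDegree ≤ (f + g).natDegree :=
    Polynomial.le_natDegree_of_ne_zero hpos.ne'
  have hdeg : (f + g).natDegree = f.natDegree := le_antisymm hle hge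
  refine ⟨hdeg, ?_⟩
  rw [Polynomial.leadingCoeff, hdeg]
  exact hpos

/-! ### The invariant for `pqP` -/

lemma pqP_inv (n : ℕ) :
    0 < (pqP n).1.leadingCoeff ∧ 0 < (pqP n).2.leadingCoeff ∧
    (pqP n).1.natDegree = alseq n ∧
    ((n % 2 = 0 ∧ (pqP n).2.natDegree = alseq n) ∨
      (n % 2 = 1 ∧ (pqP n).2.natDegree + 1 = alseq n)) := by
  induction n with
  | zero =>
      refine ⟨?_, ?_, ?_, Or.inl ⟨rfl, ?_⟩⟩ <;>
        simp [pqP, alseq, Polynomial.leadingCoeff, Polynomial.natDegree_C_mul (by norm_num : (4:ℤ) ≠ 0)]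
  | succ n ih =>
      obtain ⟨hp, hq, hdp, hcase⟩ := ih
      set p := (pqP n).1 with hpdef
      set q := (pqP n).2 with hqdef
      have hp0 : p ≠ 0 := Polynomial.leadingCoeff_ne_zero.mp hp.ne'
      have hq0 : q ≠ 0 := Polynomial.leadingCoeff_ne_zero.mp hq.ne'
      have hX0 : (Polynomial.X : Polynomial ℤ) ≠ 0 := Polynomial.X_ne_zero
      have hdp2 : (p ^ 2).natDegree = 2 * p.natDegree := Polynomial.natDegree_pow p 2
      have hlp2 : (p ^ 2).leadingCoeff = p.leadingCoeff ^ 2 := Polynomial.leadingCoeff_pow p 2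
      have hdq2 : (Polynomial.X * q ^ 2).natDegree = 1 + 2 * q.natDegree := by
        rw [Polynomial.natDegree_mul hX0 (pow_ne_zero 2 hq0), Polynomial.natDegree_X,
          Polynomial.natDegree_pow]
      have hlq2 : (Polynomial.X * q ^ 2).leadingCoeff = q.leadingCoeff ^ 2 := by
        rw [Polynomial.leadingCoeff_mul, Polynomial.leadingCoeff_X, one_mul,
          Polynomial.leadingCoeff_pow]
      have hpq1 : (pqP (n + 1)).1 = p ^ 2 + Polynomial.X * q ^ 2 := rfl
      have hpq2 : (pqP (n + 1)).2 = p ^ 2 := rfl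
      rcases hcase with ⟨hpar, hdq⟩ | ⟨hpar, hdq⟩
      · -- n even : deg q = deg p, X q² dominates
        have hlt : (p ^ 2).natDegree < (Polynomial.X * q ^ 2).natDegree := by
          rw [hdp2, hdq2, hdq, hdp]; omega
        obtain ⟨hd, hl⟩ := lead_add_of_lt hlt
        have halp : alseq (n + 1) = 2 * alseq n + 1 := by simp [alseq, hpar]
        refine ⟨?_, ?_, ?_, Or.inr ⟨by omega, ?_⟩⟩
        · rw [hpq1, hl, hlq2]; positivity
        · rw [hpq2, hlp2]; positivity
        · rw [hpq1, hd, hdq2, hdq, halp]; omega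
        · rw [hpq2, hdp2, hdp, halp]
      · -- n odd : deg q + 1 = deg p, p² dominates
        have hlt : (Polynomial.X * q ^ 2).natDegree < (p ^ 2).natDegree := by
          rw [hdp2, hdq2, hdp]; omega
        obtain ⟨hd, hl⟩ := lead_add_of_lt hlt
        rw [add_comm (p ^ 2)] at hpq1
        have halp : alseq (n + 1) = 2 * alseq n := by simp [alseq, hpar]
        refine ⟨?_, ?_, ?_, Or.inl ⟨by omega, ?_⟩⟩
        · rw [hpq1, hl, hlp2]; positivity
        · rw [hpq2, hlp2]; positivity
        · rw [hpq1, hd, hdp2, hdp, halp]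
        · rw [hpq2, hdp2, hdp, halp]

/-! ### The invariant for `uvP` -/

lemma uvP_one : uvP 1 = (Polynomial.X ^ 4, Polynomial.X ^ 4) := by
  have h1 : (uvP 1).1 = Polynomial.X ^ 4 := by simp [uvP]; ring
  have h2 : (uvP 1).2 = Polynomial.X ^ 4 := by simp [uvP]; ring
  exact Prod.ext h1 h2

lemma uvP_inv (n : ℕ) (hn : 1 ≤ n) :
    0 < (uvP n).1.leadingCoeff ∧ 0 < (uvP n).2.leadingCoeff ∧
    (uvP n).1.natDegree = aseq n ∧
    ((n % 2 = 1 ∧ (uvP n).2.natDegree = aseq n) ∨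
      (n % 2 = 0 ∧ (uvP n).2.natDegree + 1 = aseq n)) := by
  induction n with
  | zero => omega
  | succ n ih =>
      rcases Nat.eq_or_lt_of_le hn with h1 | h1
      · -- base case n + 1 = 1
        have : n = 0 := by omega
        subst this
        rw [uvP_one]
        refine ⟨?_, ?_, ?_, Or.inl ⟨rfl, ?_⟩⟩ <;>
          simp [aseq, Polynomial.leadingCoeff_X_pow, Polynomial.natDegree_X_pow]
      · obtain ⟨hu, hv, hdu, hcase⟩ := ih (by omega)
        set u := (uvP n).1 with hudef
        set v := (uvP n).2 with hvdef
        have hu0 : u ≠ 0 := Polynomial.leadingCoeff_ne_zero.mp hu.ne'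
        have hv0 : v ≠ 0 := Polynomial.leadingCoeff_ne_zero.mp hv.ne'
        have hX0 : (Polynomial.X : Polynomial ℤ) ≠ 0 := Polynomial.X_ne_zero
        have hdu2 : (u ^ 2).natDegree = 2 * u.natDegree := Polynomial.natDegree_pow u 2
        have hlu2 : (u ^ 2).leadingCoeff = u.leadingCoeff ^ 2 := Polynomial.leadingCoeff_pow u 2
        have hduv : (Polynomial.X * u * v).natDegree = 1 + u.natDegree + v.natDegree := by
          rw [Polynomial.natDegree_mul (mul_ne_zero hX0 hu0) hv0,
            Polynomial.natDegree_mul hX0 hu0, Polynomial.natDegree_X]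
        have hluv : (Polynomial.X * u * v).leadingCoeff = u.leadingCoeff * v.leadingCoeff := by
          rw [Polynomial.leadingCoeff_mul, Polynomial.leadingCoeff_mul,
            Polynomial.leadingCoeff_X, one_mul]
        have huv1 : (uvP (n + 1)).1 = u ^ 2 + Polynomial.X * u * v := rfl
        have huv2 : (uvP (n + 1)).2 = u ^ 2 := rfl
        rcases hcase with ⟨hpar, hdv⟩ | ⟨hpar, hdv⟩
        · -- n odd : deg v = deg u, X u v dominates
          have hlt : (u ^ 2).natDegree < (Polynomial.X * u * v).natDegree := by
            rw [hdu2, hduv, hdv, hdu]; omega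
          obtain ⟨hd, hl⟩ := lead_add_of_lt hlt
          have has : aseq (n + 1) = 2 * aseq n + 1 := by simp [aseq, hpar]
          refine ⟨?_, ?_, ?_, Or.inr ⟨by omega, ?_⟩⟩
          · rw [huv1, hl, hluv]; positivity
          · rw [huv2, hlu2]; positivity
          · rw [huv1, hd, hduv, hdu, hdv, has]; omega
          · rw [huv2, hdu2, hdu, has]
        · -- n even : deg v + 1 = deg u, equal top degrees
          have heq : (u ^ 2).natDegree = (Polynomial.X * u * v).natDegree := by
            rw [hdu2, hduv]; omega
          have hpos1 : 0 < (u ^ 2).leadingCoeff := by rw [hlu2]; positivity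
          have hpos2 : 0 < (Polynomial.X * u * v).leadingCoeff := by
            rw [hluv]; positivity
          obtain ⟨hd, hl⟩ := lead_add_of_eq heq hpos1 hpos2
          have has : aseq (n + 1) = 2 * aseq n := by simp [aseq, hpar]
          refine ⟨?_, ?_, ?_, Or.inl ⟨by omega, ?_⟩⟩
          · rw [huv1]; exact hl
          · rw [huv2, hlu2]; positivity
          · rw [huv1, hd, hdu2, hdu, has]
          · rw [huv2, hdu2, hdu, has]

lemma natDegree_uvP (n : ℕ) : (uvP n).1.natDegree = aseq n := by
  rcases Nat.eq_zero_or_pos n with rfl | hn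
  · show (-(Polynomial.X ^ 2 : Polynomial ℤ)).natDegree = 2
    rw [Polynomial.natDegree_neg, Polynomial.natDegree_X_pow]
  · exact (uvP_inv n hn).2.2.1

/-! ### Total degree bounds -/

lemma RS_totalDegree (n : ℕ) :
    (RS n).1.totalDegree ≤ aseq n ∧
    ((n % 2 = 1 ∧ (RS n).2.totalDegree ≤ aseq n) ∨
      (n % 2 = 0 ∧ (RS n).2.totalDegree + 1 ≤ aseq n)) := by
  induction n with
  | zero =>
      constructor
      · show (4 * X 1 - (X 0) ^ 2 : MvPolynomial (Fin 2) ℤ).totalDegree ≤ 2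
        rw [sub_eq_add_neg]
        refine (totalDegree_add _ _).trans (max_le ?_ ?_)
        · refine (totalDegree_mul _ _).trans ?_
          have h4 : ((4 : MvPolynomial (Fin 2) ℤ)) = C 4 := by norm_num
          rw [h4, totalDegree_C, totalDegree_X]; omega
        · rw [totalDegree_neg]
          refine (totalDegree_pow _ _).trans ?_
          rw [totalDegree_X]
      · refine Or.inr ⟨rfl, ?_⟩
        show (X 1 : MvPolynomial (Fin 2) ℤ).totalDegree + 1 ≤ 2
        rw [totalDegree_X]
  | succ n ih =>
      obtain ⟨hr, hcase⟩ := ih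
      set R := (RS n).1
      set S := (RS n).2
      have h1 : (R ^ 2).totalDegree ≤ 2 * R.totalDegree := totalDegree_pow R 2
      have h2 : (X 0 * R * S).totalDegree ≤ 1 + R.totalDegree + S.totalDegree := by
        refine (totalDegree_mul _ _).trans ?_
        have := (totalDegree_mul (X 0 : MvPolynomial (Fin 2) ℤ) R).trans
          (by rw [totalDegree_X (R := ℤ) (0 : Fin 2)] : (X (0:Fin 2) : MvPolynomial (Fin 2) ℤ).totalDegree + R.totalDegree ≤ 1 + R.totalDegree)
        omega
      have h3 : (X 1 * S ^ 2).totalDegree ≤ 1 + 2 * S.totalDegree := by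
        refine (totalDegree_mul _ _).trans ?_
        have := totalDegree_pow S 2
        rw [totalDegree_X]
        omega
      have hRS1 : (RS (n + 1)).1 = R ^ 2 + X 0 * R * S + X 1 * S ^ 2 := rfl
      have hRS2 : (RS (n + 1)).2 = R ^ 2 := rfl
      have hadd : (RS (n + 1)).1.totalDegree ≤
          max (max (R ^ 2).totalDegree (X 0 * R * S).totalDegree) (X 1 * S ^ 2).totalDegree := by
        rw [hRS1]
        exact (totalDegree_add _ _).trans (max_le_max (totalDegree_add _ _) le_rfl)
      rcases hcase with ⟨hpar, hs⟩ | ⟨hpar, hs⟩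
      · have has : aseq (n + 1) = 2 * aseq n + 1 := by simp [aseq, hpar]
        constructor
        · refine hadd.trans ?_
          simp only [max_le_iff]
          omega
        · refine Or.inr ⟨by omega, ?_⟩
          rw [hRS2, has]
          omega
      · have has : aseq (n + 1) = 2 * aseq n := by simp [aseq, hpar]
        constructor
        · refine hadd.trans ?_
          simp only [max_le_iff]
          omega
        · refine Or.inl ⟨by omega, ?_⟩
          rw [hRS2, has]
          omega

lemma totalDegree_RS_eq (n : ℕ) : (RS n).1.totalDegree = aseq n := by
  refine le_antisymm (RS_totalDegree n).1 ?_
  have hb := MvPolynomial.aeval_natDegree_le (m := (RS n).1.totalDegree) (n := 1) (RS n).1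
      (le_refl (RS n).1.totalDegree)
      (fun i : Fin 2 => if i = 0 then Polynomial.X else 0)
      (fun i => by by_cases h : i = 0 <;> simp [h])
  rw [(aeval_RS_c n).1, natDegree_uvP] at hb
  omega

/-! ### Arithmetic of the degree sequences -/

lemma aseq_sub_alseq (n : ℕ) :
    ((aseq n : ℚ)) - (alseq n : ℚ) = ((2 : ℚ) ^ (n + 1) - (-1) ^ (n + 1)) / 3 := by
  induction n with
  | zero => norm_num [aseq, alseq]
  | succ n ih =>
      have h2 : (2 : ℚ) ^ (n + 2) = 2 * 2 ^ (n + 1) := by ring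
      have hm : (-1 : ℚ) ^ (n + 2) = -(-1) ^ (n + 1) := by ring
      rcases Nat.even_or_odd n with he | ho
      · have hpar : n % 2 = 0 := Nat.even_iff.mp he
        have hsign : (-1 : ℚ) ^ (n + 1) = -1 := (he.add_one).neg_one_pow
        have hsign2 : (-1 : ℚ) ^ (n + 2) = 1 := (he.add_one.add_one).neg_one_pow
        have ha : aseq (n + 1) = 2 * aseq n := by simp [aseq, hpar]
        have hal : alseq (n + 1) = 2 * alseq n + 1 := by simp [alseq, hpar]
        rw [hsign] at ih
        simp only [ha, hal]
        push_cast
        rw [hsign2, h2]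
        linarith
      · have hpar : n % 2 = 1 := Nat.odd_iff.mp ho
        have hsign : (-1 : ℚ) ^ (n + 1) = 1 := (ho.add_one).neg_one_pow
        have hsign2 : (-1 : ℚ) ^ (n + 2) = -1 := (ho.add_one.add_one).neg_one_pow
        have ha : aseq (n + 1) = 2 * aseq n + 1 := by simp [aseq, hpar]
        have hal : alseq (n + 1) = 2 * alseq n := by simp [alseq, hpar]
        rw [hsign] at ih
        simp only [ha, hal]
        push_cast
        rw [hsign2, h2]
        linarith

theorem totalDegree_R_sub_degree_R1 (k : ℕ) (hk : 1 ≤ k) :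
    ((Rpoly k).totalDegree : ℚ) - ((R1poly k).natDegree : ℚ)
      = ((2 : ℚ) ^ k - (-1) ^ k) / 3 := by
  obtain ⟨n, rfl⟩ : ∃ n, k = n + 1 := ⟨k - 1, by omega⟩
  have hR : Rpoly (n + 1) = (RS n).1 := rfl
  have h1 : (Rpoly (n + 1)).totalDegree = aseq n := by rw [hR, totalDegree_RS_eq]
  have h2 : (R1poly (n + 1)).natDegree = alseq n := by
    have : R1poly (n + 1) = (pqP n).1 := by
      rw [R1poly, hR, (aeval_RS_d n).1]
    rw [this, (pqP_inv n).2.2.1]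
  rw [h1, h2]
  exact aseq_sub_alseq n
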